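/- arXiv:1407.6385 — 4 statements merged into one kernel-verified Lean document; each statement's English description precedes it below -/
import Mathlib

section
/- (Lemma on conjugation of MΔ⁻¹r by T_I(r), identity (tiMr).) Let r : ℤ → k be nowhere vanishing and M : ℤ → k any function. Then as linear operators on V: T_I(r) ∘ M_M ∘ Δ⁻¹ ∘ M_r ∘ T_I(r)⁻¹ = M_{Λ⁻¹(r⁻¹)} ∘ Δ⁻¹ ∘ M_{r·M·Λ⁻¹(r)}; that is, the conjugated operator is again of the form (function)·Δ⁻¹·(function), with left coefficient Λ⁻¹(r⁻¹) and right coefficient the pointwise product r·M·Λ⁻¹(r). -/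
open Finset

namespace CdKP

variable {k : Type*} [Field k]

/-- Shift operator: `(Λ f) n = f (n+1)`. -/
def Lam (f : ℤ → k) : ℤ → k := fun n => f (n + 1)

/-- Inverse shift operator: `(Λ⁻¹ f) n = f (n-1)`. -/
def LamInv (f : ℤ → k) : ℤ → k := fun n => f (n - 1)

/-- Difference operator `Δ = Λ - 1`. -/
def Dlt (f : ℤ → k) : ℤ → k := fun n => f (n + 1) - f n

/-- Formal adjoint difference operator `Δ* = Λ⁻¹ - 1`. -/
def DltStar (f : ℤ → k) : ℤ → k := fun n => f (n - 1) - f n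

/-- Inverse of `Δ` on `V`: `(Δ⁻¹ f) n = -∑_{m ≥ n} f m`. -/
noncomputable def Dinv (f : ℤ → k) : ℤ → k := fun n => -∑ᶠ m ∈ Set.Ici n, f m

/-- Membership in `V`: `f n = 0` for all sufficiently large `n`. -/
def InV (f : ℤ → k) : Prop := ∃ N : ℤ, ∀ n ≥ N, f n = 0

/-- Multiplication operator `M_g`: `(M_g f) n = g n * f n`. -/
def Mul (g f : ℤ → k) : ℤ → k := fun n => g n * f n

/-- Pointwise inverse of a function. -/
def pinv (r : ℤ → k) : ℤ → k := fun n => (r n)⁻¹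

/-- Integral-type gauge transformation operator `T_I(r) = M_{Λ⁻¹(r⁻¹)} ∘ Δ⁻¹ ∘ M_r`. -/
noncomputable def TI (r f : ℤ → k) : ℤ → k := Mul (LamInv (pinv r)) (Dinv (Mul r f))

/-- The inverse of `T_I(r)`: `M_{r⁻¹} ∘ Δ ∘ M_{Λ⁻¹(r)}`. -/
def TIinv (r f : ℤ → k) : ℤ → k := Mul (pinv r) (Dlt (Mul (LamInv r) f))

lemma telescope (g : ℤ → k) (n : ℤ) : ∀ B, n ≤ B →
    ∑ m ∈ Finset.Ico n B, (g (m + 1) - g m) = g B - g n := by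
  intro B hB
  obtain ⟨d, rfl⟩ : ∃ d : ℕ, B = n + d := ⟨(B - n).toNat, by omega⟩
  clear hB
  induction d with
  | zero => simp
  | succ d ih =>
    have h1 : Finset.Ico n (n + ((d + 1 : ℕ) : ℤ)) =
        insert (n + (d : ℤ)) (Finset.Ico n (n + (d : ℤ))) := by
      ext m
      simp only [Finset.mem_Ico, Finset.mem_insert]
      push_cast
      omega
    rw [h1, Finset.sum_insert (by simp [Finset.mem_Ico]), ih]
    push_cast
    ring_nf

lemma dinv_dlt (g : ℤ → k) (hg : InV g) : Dinv (Dlt g) = g := by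
  obtain ⟨N, hN⟩ := hg
  funext n
  have hB : n ≤ max N n := le_max_right _ _
  have key : (∑ᶠ m ∈ Set.Ici n, Dlt g m) = ∑ m ∈ Finset.Ico n (max N n), Dlt g m := by
    apply finsum_mem_eq_sum_of_inter_support_eq
    ext m
    simp only [Set.mem_inter_iff, Set.mem_Ici, Function.mem_support, Finset.coe_Ico,
      Set.mem_Ico]
    constructor
    · rintro ⟨h1, h2⟩
      refine ⟨⟨h1, ?_⟩, h2⟩
      by_contra h
      push_neg at h
      apply h2
      have h1' : N ≤ m := le_trans (le_max_left _ _) h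
      have h2' : N ≤ m + 1 := by omega
      simp [Dlt, hN _ h1', hN _ h2']
    · rintro ⟨⟨h1, _⟩, h2⟩; exact ⟨h1, h2⟩
  have : Dinv (Dlt g) n = -(g (max N n) - g n) := by
    simp only [Dinv]
    rw [key]
    simp only [Dlt]
    rw [telescope g n _ hB]
  rw [this, hN _ (le_max_left _ _)]
  ring

/-- Identity (tiMr): on `V`,
`T_I(r) ∘ M_M ∘ Δ⁻¹ ∘ M_r ∘ T_I(r)⁻¹ = M_{Λ⁻¹(r⁻¹)} ∘ Δ⁻¹ ∘ M_{r·M·Λ⁻¹(r)}`. -/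
theorem TI_conj_MdinvR {k : Type*} [Field k] (r : ℤ → k) (hr : ∀ n, r n ≠ 0)
    (M : ℤ → k) (f : ℤ → k) (hf : InV f) :
    TI r (Mul M (Dinv (Mul r (TIinv r f)))) =
      Mul (LamInv (pinv r)) (Dinv (Mul (fun n => r n * M n * LamInv r n) f)) := by
  have h1 : Mul r (TIinv r f) = Dlt (Mul (LamInv r) f) := by
    funext n
    simp only [Mul, TIinv, pinv]
    rw [mul_inv_cancel_left₀ (hr n)]
  have h2 : InV (Mul (LamInv r) f) := by
    obtain ⟨N, hN⟩ := hf
    exact ⟨N, fun n hn => by simp [Mul, hN n hn]⟩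
  have h3 : Dinv (Mul r (TIinv r f)) = Mul (LamInv r) f := by
    rw [h1, dinv_dlt _ h2]
  rw [h3]
  have h4 : Mul r (Mul M (Mul (LamInv r) f)) =
      Mul (fun n => r n * M n * LamInv r n) f := by
    funext n; simp only [Mul]; ring
  rw [TI, h4]

end CdKP
end

section
/- (Lemma on conjugation of MΔ⁻¹N by T_I(r), identity (tiMN).) Let r : ℤ → k be nowhere vanishing, M, N : ℤ → k functions, and let G : ℤ → k be any function with Δ(G) = r·M (pointwise). Set M̃ := Λ⁻¹(r⁻¹)·G, Ñ := Λ⁻¹(r)·Δ*(N·r⁻¹), and h := −Λ⁻¹(r)·Δ*(N·Λ(G)·r⁻¹), all defined pointwise. Then as linear operators on V: T_I(r) ∘ M_M ∘ Δ⁻¹ ∘ M_N ∘ T_I(r)⁻¹ = M_{Λ⁻¹(r⁻¹)} ∘ Δ⁻¹ ∘ M_h + M_{M̃} ∘ Δ⁻¹ ∘ M_{Ñ}. (Here M̃ realizes T_I(r)(M), Ñ realizes T_I(r)^{*−1}(N), and h realizes T_I(r)^{*−1}((MΔ⁻¹N)*(r)) of the formal pseudo-difference calculus; the identity holds for every choice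 of the antiderivative G.) -/
/-!
Write `u := Λ⁻¹(r)·f` and `φ := N·r⁻¹`, so that `N·T_I(r)⁻¹ f = φ·Δu`. Summation by parts gives
`Δ⁻¹(φ·Δu)(n) = Δ⁻¹(Ñ f)(n+1) + φ(n)u(n)`. Both sides of the identity carry the factor `Λ⁻¹(r⁻¹)`
on the left, so it remains to see that `Δ⁻¹(r·M·Δ⁻¹(φ·Δu)) = Δ⁻¹(h f) + G·Δ⁻¹(Ñ f)`. Both are in `V`,
where `Δ` is injective, so it suffices to compare differences; by the Leibniz rules for `Δ` and `Δ*`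
this reduces to `h + G·Ñ = Λ⁻¹(r)·φ·ΔG`, and `ΔG = r·M` finishes.
-/

open Finset

namespace CdKP

variable {k : Type*} [Field k]

namespace InV

variable {f u v : ℤ → k}

theorem mul (g : ℤ → k) (hf : InV f) : InV (Mul g f) := by
  obtain ⟨N, hN⟩ := hf
  exact ⟨N, fun n hn => by simp [Mul, hN n hn]⟩

theorem add (hu : InV u) (hv : InV v) : InV (u + v) := by
  obtain ⟨N, hN⟩ := hu
  obtain ⟨P, hP⟩ := hv
  exact ⟨max N P, fun n hn => by
    simp [hN n (le_of_max_le_left hn), hP n (le_of_max_le_right hn)]⟩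

theorem shift (hf : InV f) : InV (fun n => f (n + 1)) := by
  obtain ⟨N, hN⟩ := hf
  exact ⟨N, fun n hn => hN (n + 1) (by omega)⟩

theorem dlt (hf : InV f) : InV (Dlt f) := by
  obtain ⟨N, hN⟩ := hf
  exact ⟨N, fun n hn => by simp [Dlt, hN n hn, hN (n + 1) (by omega)]⟩

theorem dinv (hf : InV f) : InV (Dinv f) := by
  obtain ⟨N, hN⟩ := hf
  refine ⟨N, fun n hn => ?_⟩
  simp only [Dinv, neg_eq_zero]
  exact finsum_mem_of_eqOn_zero fun m hm => hN m (hn.trans hm)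

end InV

variable {f g u : ℤ → k}

theorem dinv_eq_neg_add_dinv_succ (hf : InV f) (n : ℤ) :
    Dinv f n = -f n + Dinv f (n + 1) := by
  obtain ⟨N, hN⟩ := hf
  have hfin : (Set.Ici (n + 1) ∩ Function.support f).Finite :=
    (Set.finite_Icc (n + 1) N).subset fun m ⟨hm, hfm⟩ =>
      ⟨hm, not_lt.mp fun h => hfm (hN m h.le)⟩
  have hIci : Set.Ici n = insert n (Set.Ici (n + 1)) := by
    ext m; simp only [Set.mem_Ici, Set.mem_insert_iff]; omega
  rw [Dinv, Dinv, hIci, finsum_mem_insert' f (by simp : n ∉ Set.Ici (n + 1)) hfin]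
  ring

theorem dlt_dinv (hf : InV f) : Dlt (Dinv f) = f := by
  funext n
  simp only [Dlt, dinv_eq_neg_add_dinv_succ hf n]
  ring

theorem eq_dinv_of_dlt_eq (hu : InV u) (h : Dlt u = g) : u = Dinv g := by
  have hg : InV g := h ▸ hu.dlt
  obtain ⟨N, hN⟩ := hu
  obtain ⟨P, hP⟩ := hg.dinv
  funext n
  rcases le_total n (max N P) with hn | hn
  · induction n, hn using Int.leInductionDown with
    | base => rw [hN _ (le_max_left _ _), hP _ (le_max_right _ _)]
    | pred m _ ih =>
      have hstep := congrFun h (m - 1)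
      rw [dinv_eq_neg_add_dinv_succ hg, sub_add_cancel, ← ih, ← hstep, Dlt, sub_add_cancel]
      ring
  · rw [hN n (le_of_max_le_left hn), hP n (le_of_max_le_right hn)]

theorem dinv_mul_dlt (φ : ℤ → k) (hu : InV u) (n : ℤ) :
    Dinv (Mul φ (Dlt u)) n = Dinv (Mul (DltStar φ) u) (n + 1) + φ n * u n := by
  have hV : InV fun m => Dinv (Mul (DltStar φ) u) (m + 1) + φ m * u m :=
    (hu.mul _).dinv.shift.add (hu.mul φ)
  refine (congrFun (eq_dinv_of_dlt_eq hV ?_) n).symm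
  funext m
  have hstep := dinv_eq_neg_add_dinv_succ (hu.mul (DltStar φ)) (m + 1)
  simp only [Dlt, Mul, DltStar, add_sub_cancel_right] at hstep ⊢
  linear_combination -hstep

theorem dlt_mul (G Z : ℤ → k) (n : ℤ) :
    Dlt (Mul G Z) n = Dlt G n * Z (n + 1) + G n * Dlt Z n := by
  simp only [Dlt, Mul]
  ring

theorem dltStar_mul_lam (φ G : ℤ → k) (n : ℤ) :
    DltStar (Mul φ (Lam G)) n = G n * DltStar φ n - φ n * Dlt G n := by
  simp only [DltStar, Mul, Lam, Dlt, sub_add_cancel]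
  ring

theorem dlt_add (u v : ℤ → k) (n : ℤ) : Dlt (u + v) n = Dlt u n + Dlt v n := by
  simp only [Dlt, Pi.add_apply]
  ring

theorem dinv_mul_TIinv (r N : ℤ → k) (hf : InV f) (n : ℤ) :
    Dinv (Mul N (TIinv r f)) n =
      Dinv (Mul (fun m => LamInv r m * DltStar (fun j => N j * (r j)⁻¹) m) f) (n + 1) +
        N n * (r n)⁻¹ * (LamInv r n * f n) := by
  set φ : ℤ → k := fun j => N j * (r j)⁻¹
  have hNT : Mul N (TIinv r f) = Mul φ (Dlt (Mul (LamInv r) f)) := by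
    funext m; simp only [Mul, TIinv, pinv, φ]; ring
  have hNt : Mul (DltStar φ) (Mul (LamInv r) f) = Mul (fun m => LamInv r m * DltStar φ m) f := by
    funext m; simp only [Mul]; ring
  rw [hNT, dinv_mul_dlt φ (hf.mul _), hNt]
  rfl

theorem TI_conj_MdinvN_general {k : Type*} [Field k] (r : ℤ → k)
    (M N G : ℤ → k) (hG : ∀ n : ℤ, Dlt G n = r n * M n)
    (f : ℤ → k) (hf : InV f) :
    TI r (Mul M (Dinv (Mul N (TIinv r f)))) =
      Mul (LamInv (pinv r))
          (Dinv (Mul (fun n => -(LamInv r n * DltStar (fun m => N m * Lam G m * (r m)⁻¹) n)) f))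
        +
      Mul (fun n => LamInv (pinv r) n * G n)
          (Dinv (Mul (fun n => LamInv r n * DltStar (fun m => N m * (r m)⁻¹) n) f)) := by
  set Nt : ℤ → k := fun n => LamInv r n * DltStar (fun m => N m * (r m)⁻¹) n
  set h : ℤ → k := fun n => -(LamInv r n * DltStar (fun m => N m * Lam G m * (r m)⁻¹) n)
  have h_add_G_mul_Nt (n : ℤ) : h n + G n * Nt n = LamInv r n * (N n * (r n)⁻¹) * (r n * M n) := by
    have hφG : (fun m => N m * Lam G m * (r m)⁻¹) = Mul (fun m => N m * (r m)⁻¹) (Lam G) := by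
      funext m; simp only [Mul]; ring
    simp only [h, Nt, hφG, dltStar_mul_lam, hG]
    ring
  have hsum : Dinv (Mul r (Mul M (Dinv (Mul N (TIinv r f))))) =
      Dinv (Mul h f) + Mul G (Dinv (Mul Nt f)) := by
    refine (eq_dinv_of_dlt_eq ((hf.mul h).dinv.add ((hf.mul Nt).dinv.mul G)) ?_).symm
    funext n
    rw [dlt_add, dlt_mul, dlt_dinv (hf.mul h), dlt_dinv (hf.mul Nt), hG]
    simp only [Mul, dinv_mul_TIinv r N hf]
    linear_combination f n * h_add_G_mul_Nt n
  funext n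
  simp only [TI, Mul, Pi.add_apply, hsum]
  ring

/-- Identity (tiMN): on `V`, for any antiderivative `G` of `r·M`,
`T_I(r) ∘ M_M ∘ Δ⁻¹ ∘ M_N ∘ T_I(r)⁻¹ = M_{Λ⁻¹(r⁻¹)} ∘ Δ⁻¹ ∘ M_h + M_M̃ ∘ Δ⁻¹ ∘ M_Ñ`
with `M̃ = Λ⁻¹(r⁻¹)·G`, `Ñ = Λ⁻¹(r)·Δ*(N·r⁻¹)`, `h = -Λ⁻¹(r)·Δ*(N·Λ(G)·r⁻¹)`. -/
theorem TI_conj_MdinvN {k : Type*} [Field k] (r : ℤ → k) (hr : ∀ n, r n ≠ 0)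
    (M N G : ℤ → k) (hG : ∀ n : ℤ, Dlt G n = r n * M n)
    (f : ℤ → k) (hf : InV f) :
    TI r (Mul M (Dinv (Mul N (TIinv r f)))) =
      Mul (LamInv (pinv r))
          (Dinv (Mul (fun n => -(LamInv r n * DltStar (fun m => N m * Lam G m * (r m)⁻¹) n)) f))
        +
      Mul (fun n => LamInv (pinv r) n * G n)
          (Dinv (Mul (fun n => LamInv r n * DltStar (fun m => N m * (r m)⁻¹) n) f)) :=
  TI_conj_MdinvN_general r M N G hG f hf

end CdKP
end

section
/- (Lemma on conjugation of qΔ⁻¹N by T_D(q), identity (tdqN).) Let q : ℤ → k be nowhere vanishing and N : ℤ → k any function. Then as linear operators on V: T_D(q) ∘ M_q ∘ Δ⁻¹ ∘ M_N ∘ T_D(q)⁻¹ = M_{Λ(q)·N·q} ∘ Δ⁻¹ ∘ M_{Λ(q⁻¹)}, where Λ(q)·N·q denotes the pointwise product. -/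
open Finset

namespace CdKP

variable {k : Type*} [Field k]

/-- Difference-type gauge transformation operator `T_D(q) = M_{Λ(q)} ∘ Δ ∘ M_{q⁻¹}`. -/
def TD (q f : ℤ → k) : ℤ → k := Mul (Lam q) (Dlt (Mul (pinv q) f))

/-- The inverse of `T_D(q)`: `M_q ∘ Δ⁻¹ ∘ M_{Λ(q⁻¹)}`. -/
noncomputable def TDinv (q f : ℤ → k) : ℤ → k := Mul q (Dinv (Mul (Lam (pinv q)) f))

lemma dinv_inV {k : Type*} [Field k] (F : ℤ → k) (hF : InV F) : InV (Dinv F) := by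
  obtain ⟨B, hB⟩ := hF
  refine ⟨B, fun n hn => ?_⟩
  simp only [Dinv, neg_eq_zero]
  apply finsum_mem_of_eqOn_zero
  intro m hm
  exact hB m (le_trans hn hm)

lemma dlt_dinv_s12 {k : Type*} [Field k] (F : ℤ → k) (hF : InV F) (n : ℤ) :
    Dlt (Dinv F) n = F n := by
  obtain ⟨B, hB⟩ := hF
  have hfin : ∀ m : ℤ, (Set.Ici m ∩ Function.support F).Finite := by
    intro m
    apply Set.Finite.subset (Set.finite_Icc m B)
    intro x hx
    simp only [Set.mem_inter_iff, Set.mem_Ici, Function.mem_support] at hx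
    refine Set.mem_Icc.mpr ⟨hx.1, ?_⟩
    by_contra h
    exact hx.2 (hB x (by omega))
  have hsplit : Set.Ici n = {n} ∪ Set.Ici (n + 1) := by
    ext x; simp only [Set.mem_Ici, Set.mem_union, Set.mem_singleton_iff]; omega
  have hdisj : Disjoint ({n} : Set ℤ) (Set.Ici (n + 1)) := by
    simp only [Set.disjoint_singleton_left, Set.mem_Ici]; omega
  have h1 : ∑ᶠ m ∈ Set.Ici n, F m = F n + ∑ᶠ m ∈ Set.Ici (n + 1), F m := by
    rw [hsplit, finsum_mem_union' hdisj ((Set.finite_singleton n).inter_of_left _) (hfin _),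
      finsum_mem_singleton]
  simp only [Dlt, Dinv, h1]
  ring

lemma mul_pinv_mul {k : Type*} [Field k] (q : ℤ → k) (hq : ∀ n, q n ≠ 0) (h : ℤ → k) :
    Mul (pinv q) (Mul q h) = h := by
  funext n
  simp only [Mul, pinv]
  exact inv_mul_cancel_left₀ (hq n) _

/-- Identity (tdqN): on `V`,
`T_D(q) ∘ M_q ∘ Δ⁻¹ ∘ M_N ∘ T_D(q)⁻¹ = M_{Λ(q)·N·q} ∘ Δ⁻¹ ∘ M_{Λ(q⁻¹)}`. -/
theorem TD_conj_qdinvN {k : Type*} [Field k] (q : ℤ → k) (hq : ∀ n, q n ≠ 0)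
    (N : ℤ → k) (f : ℤ → k) (hf : InV f) :
    TD q (Mul q (Dinv (Mul N (TDinv q f)))) =
      Mul (fun n => Lam q n * N n * q n) (Dinv (Mul (Lam (pinv q)) f)) := by
  set g := Dinv (Mul (Lam (pinv q)) f) with hg
  have hgV : InV g := by
    obtain ⟨B, hB⟩ := hf
    exact dinv_inV _ ⟨B, fun n hn => by simp [Mul, hB n hn]⟩
  have hNqgV : InV (Mul N (Mul q g)) := by
    obtain ⟨B, hB⟩ := hgV
    exact ⟨B, fun n hn => by simp [Mul, hB n hn]⟩
  have hTDinv : TDinv q f = Mul q g := rfl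
  funext n
  simp only [TD, hTDinv, mul_pinv_mul q hq, dlt_dinv_s12 _ hNqgV, Mul, Lam]
  ring

end CdKP
end

section
/- (Projection identity for T_D-conjugation, identity (Td).) Let q : ℤ → k be nowhere vanishing and let A⁺ = ∑_{j=0}^{d} M_{a_j} ∘ Δ^j be a difference operator. Write A⁺(q) := ∑_{j=0}^{d} a_j·Δ^j(q) for the pointwise application of A⁺ to q. Then T_D(q) ∘ A⁺ ∘ T_D(q)⁻¹ − M_{Λ(q)·Δ(q⁻¹·A⁺(q))} ∘ Δ⁻¹ ∘ M_{Λ(q⁻¹)} is a difference operator; i.e. there exists a difference operator P with T_D(q) ∘ A⁺ ∘ T_D(q)⁻¹ = P + M_{Λ(q)·Δ(q⁻¹·A⁺(q))} ∘ Δ⁻¹ ∘ M_{Λ(q⁻¹)} as linear operators on V. -/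
open Finset

namespace CdKP

variable {k : Type*} [Field k]

/-- A difference operator: a finite sum `∑_{j=0}^{d} M_{a_j} ∘ Δ^j`. -/
def IsDiffOp (P : (ℤ → k) → ℤ → k) : Prop :=
  ∃ (d : ℕ) (a : ℕ → ℤ → k),
    ∀ (f : ℤ → k) (n : ℤ), P f n = ∑ j ∈ Finset.range (d + 1), a j n * Dlt^[j] f n

lemma IsDiffOp.congr {P Q : (ℤ → k) → ℤ → k} (hP : IsDiffOp P)
    (h : ∀ f n, P f n = Q f n) : IsDiffOp Q := by
  obtain ⟨d, a, ha⟩ := hP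
  exact ⟨d, a, fun f n => by rw [← h f n]; exact ha f n⟩

lemma IsDiffOp.mul_left {P : (ℤ → k) → ℤ → k} (hP : IsDiffOp P) (c : ℤ → k) :
    IsDiffOp (fun f n => c n * P f n) := by
  obtain ⟨d, a, ha⟩ := hP
  refine ⟨d, fun j n => c n * a j n, fun f n => ?_⟩
  simp only [ha, Finset.mul_sum, mul_assoc]

lemma sum_ite_lt {m₁ m₂ : ℕ} (h : m₁ ≤ m₂) (b : ℕ → ℤ → k) (f : ℤ → k) (n : ℤ) :
    ∑ j ∈ range m₂, (if j < m₁ then b j n else 0) * Dlt^[j] f n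
      = ∑ j ∈ range m₁, b j n * Dlt^[j] f n := by
  rw [← Finset.sum_subset (Finset.range_subset_range.mpr h)]
  · exact Finset.sum_congr rfl fun j hj => by rw [if_pos (mem_range.mp hj)]
  · intro j hj hj'
    rw [if_neg (by simpa using hj'), zero_mul]

lemma IsDiffOp.add {P Q : (ℤ → k) → ℤ → k} (hP : IsDiffOp P) (hQ : IsDiffOp Q) :
    IsDiffOp (fun f n => P f n + Q f n) := by
  obtain ⟨d₁, a₁, h₁⟩ := hP
  obtain ⟨d₂, a₂, h₂⟩ := hQ
  refine ⟨max d₁ d₂, fun j n => (if j < d₁ + 1 then a₁ j n else 0) +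
    (if j < d₂ + 1 then a₂ j n else 0), fun f n => ?_⟩
  simp only [add_mul, Finset.sum_add_distrib]
  rw [h₁, h₂, sum_ite_lt (by omega), sum_ite_lt (by omega)]

lemma IsDiffOp.comp_dlt {P : (ℤ → k) → ℤ → k} (hP : IsDiffOp P) :
    IsDiffOp (fun f => P (Dlt f)) := by
  obtain ⟨d, a, ha⟩ := hP
  refine ⟨d + 1, fun j n => if j = 0 then 0 else a (j - 1) n, fun f n => ?_⟩
  show P (Dlt f) n = _
  rw [ha, Finset.sum_range_succ' (fun j => (if j = 0 then 0 else a (j - 1) n) * Dlt^[j] f n) (d+1)]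
  simp [Function.iterate_succ_apply]

lemma IsDiffOp.dlt_comp {P : (ℤ → k) → ℤ → k} (hP : IsDiffOp P) :
    IsDiffOp (fun f n => Dlt (P f) n) := by
  obtain ⟨d, a, ha⟩ := hP
  have h1 : IsDiffOp (fun (f : ℤ → k) n => ∑ j ∈ range (d+1), a j (n+1) * Dlt^[j] f n) :=
    ⟨d, fun j n => a j (n+1), fun f n => rfl⟩
  have h2 : IsDiffOp (fun (f : ℤ → k) n =>
      ∑ j ∈ range (d+1), (a j (n+1) - a j n) * Dlt^[j] f n) :=
    ⟨d, fun j n => a j (n+1) - a j n, fun f n => rfl⟩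
  refine (h1.comp_dlt.add h2).congr (fun f n => ?_)
  show _ = P f (n+1) - P f n
  rw [ha f (n+1), ha f n, ← Finset.sum_sub_distrib, ← Finset.sum_add_distrib]
  refine Finset.sum_congr rfl fun j hj => ?_
  have hh : Dlt^[j] (Dlt f) n = Dlt^[j] f (n+1) - Dlt^[j] f n := by
    rw [← Function.iterate_succ_apply, Function.iterate_succ_apply']
    rfl
  rw [hh]; ring

lemma isDiffOp_zero : IsDiffOp (fun (_ : ℤ → k) (_ : ℤ) => (0:k)) :=
  ⟨0, fun _ _ => 0, fun f n => by simp⟩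

lemma isDiffOp_sum (m : ℕ) (Q : ℕ → (ℤ → k) → ℤ → k) (hQ : ∀ j, IsDiffOp (Q j)) :
    IsDiffOp (fun f n => ∑ j ∈ range m, Q j f n) := by
  induction m with
  | zero => exact isDiffOp_zero.congr (fun f n => by simp)
  | succ m ih => exact (ih.add (hQ m)).congr (fun f n => (Finset.sum_range_succ _ _).symm)

lemma isDiffOp_iter_dlt_mul (c : ℤ → k) (j : ℕ) :
    IsDiffOp (fun f n => Dlt^[j] (Mul c f) n) := by
  induction j with
  | zero => exact ⟨0, fun _ => c, fun f n => by simp [Mul]⟩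
  | succ j ih =>
      refine ih.dlt_comp.congr (fun f n => ?_)
      show Dlt (Dlt^[j] (Mul c f)) n = Dlt^[j+1] (Mul c f) n
      rw [Function.iterate_succ_apply']

lemma IsDiffOp.comp_mul {P : (ℤ → k) → ℤ → k} (hP : IsDiffOp P) (c : ℤ → k) :
    IsDiffOp (fun f => P (Mul c f)) := by
  obtain ⟨d, a, ha⟩ := hP
  have h := isDiffOp_sum (d+1) (fun j f n => a j n * Dlt^[j] (Mul c f) n)
    (fun j => (isDiffOp_iter_dlt_mul c j).mul_left (a j))
  exact h.congr (fun f n => (ha (Mul c f) n).symm)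

lemma iter_dlt_const_one (i : ℕ) : Dlt^[i+1] (fun _ : ℤ => (1:k)) = fun _ => 0 := by
  induction i with
  | zero => funext n; simp [Dlt]
  | succ i ih => rw [Function.iterate_succ_apply', ih]; funext n; simp [Dlt]

lemma key_split (q : ℤ → k) (d : ℕ) (a : ℕ → ℤ → k) :
    ∃ R : (ℤ → k) → ℤ → k, IsDiffOp R ∧ ∀ (g : ℤ → k) (n : ℤ),
      (∑ j ∈ range (d+1), a j n * Dlt^[j] (Mul q g) n) =
        (∑ j ∈ range (d+1), a j n * Dlt^[j] q n) * g n + R (Dlt g) n := by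
  have hA : IsDiffOp (fun (g : ℤ → k) n => ∑ j ∈ range (d+1), a j n * Dlt^[j] (Mul q g) n) :=
    IsDiffOp.comp_mul ⟨d, a, fun f n => rfl⟩ q
  obtain ⟨e, c, hc⟩ := hA
  have hc' : ∀ (g : ℤ → k) (n : ℤ), (∑ j ∈ range (d+1), a j n * Dlt^[j] (Mul q g) n)
      = ∑ i ∈ range (e+1), c i n * Dlt^[i] g n := hc
  have hc0 : ∀ n, c 0 n = ∑ j ∈ range (d+1), a j n * Dlt^[j] q n := by
    intro n
    have h1 := hc' (fun _ => 1) n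
    have hq1 : Mul q (fun _ => (1:k)) = q := funext fun m => mul_one _
    rw [hq1] at h1
    rw [h1, Finset.sum_range_succ']
    simp [iter_dlt_const_one]
  refine ⟨fun h n => ∑ i ∈ range (e+1), (if i < e then c (i+1) n else 0) * Dlt^[i] h n,
    ⟨e, fun i n => if i < e then c (i+1) n else 0, fun f n => rfl⟩, fun g n => ?_⟩
  show _ = _ + ∑ i ∈ range (e+1), (if i < e then c (i+1) n else 0) * Dlt^[i] (Dlt g) n
  rw [hc' g n, Finset.sum_range_succ', ← hc0, sum_ite_lt (Nat.le_succ e)]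
  simp only [Function.iterate_zero_apply]
  have hcg : ∀ x ∈ range e, c (x+1) n * Dlt^[x+1] g n = c (x+1) n * Dlt^[x] (Dlt g) n :=
    fun x _ => by rw [Function.iterate_succ_apply]
  rw [Finset.sum_congr rfl hcg]
  exact add_comm _ _

lemma dlt_dinv_s15 (g : ℤ → k) (hg : InV g) : ∀ n, Dlt (Dinv g) n = g n := by
  obtain ⟨N, hN⟩ := hg
  intro n
  set M : ℤ := max (n+1) N with hM
  have key : ∀ m : ℤ, m ≤ n + 1 → ∑ᶠ x ∈ Set.Ici m, g x = ∑ x ∈ Finset.Ico m M, g x := by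
    intro m hm
    refine finsum_mem_eq_sum_of_inter_support_eq g ?_
    ext x
    simp only [Set.mem_inter_iff, Set.mem_Ici, Function.mem_support, Finset.coe_Ico,
      Set.mem_Ico]
    constructor
    · rintro ⟨hx, hx0⟩
      refine ⟨⟨hx, ?_⟩, hx0⟩
      by_contra hcon
      exact hx0 (hN x (by omega))
    · rintro ⟨⟨hx, _⟩, hx0⟩
      exact ⟨hx, hx0⟩
  have hIco : Finset.Ico n M = insert n (Finset.Ico (n+1) M) := by
    have h1 : Finset.Ico (n+1) M = Finset.Ioo n M := by
      ext x; simp only [Finset.mem_Ico, Finset.mem_Ioo]; omega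
    rw [h1, Finset.Ioo_insert_left (by omega : n < M)]
  show Dinv g (n+1) - Dinv g n = g n
  simp only [Dinv, key n (by omega), key (n+1) le_rfl, hIco]
  rw [Finset.sum_insert (by simp)]
  ring

/-- Identity (Td): for a difference operator `A⁺ = ∑_{j=0}^{d} M_{a_j} ∘ Δ^j`, there is a
difference operator `P` with
`T_D(q) ∘ A⁺ ∘ T_D(q)⁻¹ = P + M_{Λ(q)·Δ(q⁻¹·A⁺(q))} ∘ Δ⁻¹ ∘ M_{Λ(q⁻¹)}` on `V`,
where `A⁺(q) = ∑_j a_j·Δ^j(q)`. -/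
theorem TD_conj_diffOp {k : Type*} [Field k] (q : ℤ → k) (hq : ∀ n, q n ≠ 0)
    (d : ℕ) (a : ℕ → ℤ → k) :
    ∃ P : (ℤ → k) → ℤ → k, IsDiffOp P ∧
      ∀ f : ℤ → k, InV f → ∀ n : ℤ,
        TD q (fun m => ∑ j ∈ Finset.range (d + 1), a j m * Dlt^[j] (TDinv q f) m) n =
          P f n +
            (Lam q n * Dlt (fun m => (q m)⁻¹ *
              ∑ j ∈ Finset.range (d + 1), a j m * Dlt^[j] q m) n) *
              Dinv (Mul (Lam (pinv q)) f) n := by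

  obtain ⟨R, hR, hkey⟩ := key_split q d a
  refine ⟨fun f n =>
      Lam q n * (((q (n+1))⁻¹ * ∑ j ∈ Finset.range (d + 1), a j (n+1) * Dlt^[j] q (n+1)) *
        (Lam (pinv q) n * f n)) +
      Lam q n * Dlt (fun m => (q m)⁻¹ * R (Mul (Lam (pinv q)) f) m) n, ?_, ?_⟩
  · have h1 : IsDiffOp (fun (f : ℤ → k) n =>
        Lam q n * (((q (n+1))⁻¹ * ∑ j ∈ Finset.range (d + 1), a j (n+1) * Dlt^[j] q (n+1)) *
          (Lam (pinv q) n * f n))) := by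
      refine ⟨0, fun _ n => Lam q n * (((q (n+1))⁻¹ *
        ∑ j ∈ Finset.range (d + 1), a j (n+1) * Dlt^[j] q (n+1)) * Lam (pinv q) n),
        fun f n => ?_⟩
      simp
      ring
    have h2 := (((hR.comp_mul (Lam (pinv q))).mul_left (pinv q)).dlt_comp).mul_left (Lam q)
    exact h1.add h2
  · intro f hf n
    set h : ℤ → k := Dinv (Mul (Lam (pinv q)) f) with hh
    have hfV : InV (Mul (Lam (pinv q)) f) := by
      obtain ⟨N, hN⟩ := hf
      exact ⟨N, fun m hm => by simp [Mul, hN m hm]⟩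
    have hDh : ∀ m, Dlt h m = Mul (Lam (pinv q)) f m := dlt_dinv_s15 _ hfV
    have hDhf : Dlt h = Mul (Lam (pinv q)) f := funext hDh
    have hTDi : TDinv q f = Mul q h := rfl
    have harg : (fun m => ∑ j ∈ Finset.range (d + 1), a j m * Dlt^[j] (TDinv q f) m)
        = fun m => (∑ j ∈ Finset.range (d + 1), a j m * Dlt^[j] q m) * h m
            + R (Mul (Lam (pinv q)) f) m := by
      funext m
      rw [hTDi, hkey h m, hDhf]
    rw [harg]
    have e1 : (q (n+1))⁻¹ * f n = h (n+1) - h n := by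
      have := (hDh n).symm
      simpa [Dlt, Mul, Lam, pinv] using this
    simp only [TD, Mul, Dlt, Lam, pinv]
    rw [e1]
    ring


end CdKP
end
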